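/- For every fixed integer ℓ ≥ 1, as N → ∞ the zigzag coefficients satisfy lim_{N→∞} Z_N^{2ℓ} = (−1)^{ℓ+1}·(2ℓ)! / (4^ℓ·(ℓ!)²) and lim_{N→∞} Z_N^{2ℓ+1} = (−1)^{ℓ}·(2ℓ)! / (4^ℓ·(ℓ!)²); in particular Z_∞^{2ℓ} = −Z_∞^{2ℓ+1}. -/

import Mathlib

open Filter Topology


lemma tendsto_div_const' (b C : ℝ) (f : ℕ → ℝ) (h : ∀ N : ℕ, |f N - b * N| ≤ C) :
    Tendsto (fun N : ℕ => f N / N) atTop (𝓝 b) := by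
  rw [← tendsto_sub_nhds_zero_iff]
  apply squeeze_zero_norm' (a := fun N : ℕ => C / N)
  · filter_upwards [eventually_ge_atTop 1] with N hN
    have hN' : (0:ℝ) < N := by exact_mod_cast Nat.lt_of_lt_of_le Nat.zero_lt_one hN
    have heq : f N / N - b = (f N - b * N) / N := by field_simp
    rw [Real.norm_eq_abs, heq, abs_div, abs_of_pos hN']
    gcongr
    exact h N
  · exact tendsto_const_div_atTop_nhds_zero_nat C

lemma tendsto_half_aux (C : ℝ) (f : ℕ → ℝ) (h : ∀ N : ℕ, |f N - (N:ℝ)/2| ≤ C) :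
    Tendsto (fun N : ℕ => f N / N) atTop (𝓝 (1/2)) := by
  apply tendsto_div_const' (1/2) C
  intro N
  rw [show (1/2:ℝ) * N = (N:ℝ)/2 by ring]
  exact h N

lemma tendsto_nat_div_add (c : ℝ) (hc : 0 ≤ c) :
    Tendsto (fun N : ℕ => (N:ℝ) / ((N:ℝ) + c)) atTop (𝓝 1) := by
  have h0 : Tendsto (fun N : ℕ => ((N:ℝ) + c) / N) atTop (𝓝 1) := by
    apply tendsto_div_const' 1 c
    intro N
    rw [show ((N:ℝ) + c) - 1 * N = c by ring, abs_of_nonneg hc]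
  have := h0.inv₀ one_ne_zero
  simpa [inv_div] using this

lemma tendsto_fact_ratio (j : ℕ) :
    Tendsto (fun N : ℕ => (N:ℝ)^j * N.factorial / (N + j).factorial) atTop (𝓝 1) := by
  induction j with
  | zero =>
    have : (fun N : ℕ => (N:ℝ)^0 * N.factorial / (N + 0).factorial) = fun _ => 1 := by
      funext N
      have : ((N.factorial : ℝ)) ≠ 0 := Nat.cast_ne_zero.mpr N.factorial_ne_zero
      simp [this]
    rw [this]; exact tendsto_const_nhds
  | succ j ih =>
    have h2 : Tendsto (fun N : ℕ => (N:ℝ) / ((N:ℝ) + (j+1))) atTop (𝓝 1) :=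
      tendsto_nat_div_add (j+1) (by positivity)
    have := ih.mul h2
    rw [mul_one] at this
    apply this.congr
    intro N
    have h3 : ((N + (j+1)).factorial : ℝ) = ((N:ℝ) + (j+1)) * (N + j).factorial := by
      rw [show N + (j+1) = (N + j) + 1 by ring, Nat.factorial_succ]
      push_cast; ring
    have h4 : ((N + j).factorial : ℝ) ≠ 0 := Nat.cast_ne_zero.mpr (Nat.factorial_ne_zero _)
    have h5 : ((N:ℝ) + (j+1)) ≠ 0 := by positivity
    rw [h3]
    field_simp
    ring
/-- The zigzag finite-difference coefficients `Z_N^j` (for `1 ≤ j ≤ N`), as defined by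
equations (defZN1)–(defZNj) of the paper.  `⌊·⌋` and `⌈·⌉` denote floor and ceiling, and
empty products equal `1`. -/
noncomputable def zigzagCoeff (N j : ℕ) : ℝ :=
  if j = 1 then
    2 * (⌊((N : ℝ) + 1) / 2⌋ : ℝ) / ((N : ℝ) + 1)
  else if j = 2 then
    2 * (⌊(N : ℝ) / 2⌋ : ℝ) * (⌈((N : ℝ) + 1) / 2⌉ : ℝ) / (((N : ℝ) + 1) * ((N : ℝ) + 2))
  else if j % 2 = 1 then
    (-1) ^ (j / 2) * (2 * (N : ℝ) + (j : ℝ) - 2 - ((j : ℝ) + 2) * (-1) ^ N) *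
      ((j - 2).factorial * N.factorial : ℝ) /
      ((((j - 1) / 2).factorial * ((j - 3) / 2).factorial * (N + j).factorial : ℕ) : ℝ) *
      (⌊(N : ℝ) / 2⌋ : ℝ) * (⌈((N : ℝ) + 1) / 2⌉ : ℝ) *
      ∏ ℓ ∈ Finset.Icc 1 ((j - 3) / 2),
        (⌊((N : ℝ) - 2 * ℓ - 1) / 2⌋ : ℝ) * (⌈((N : ℝ) + 2 * ℓ + 1) / 2⌉ : ℝ)
  else
    (-1) ^ (1 + j / 2) * (j.factorial * N.factorial : ℝ) /
      ((((j / 2).factorial) ^ 2 * (N + j).factorial : ℕ) : ℝ) *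
      (⌊(N : ℝ) / 2⌋ : ℝ) * (⌈((N : ℝ) + 1) / 2⌉ : ℝ) *
      (⌈((N : ℝ) - 3) / 2⌉ : ℝ) * (⌈((N : ℝ) + 3) / 2⌉ : ℝ) *
      ∏ ℓ ∈ Finset.Icc 1 (j / 2 - 2),
        (⌊((N : ℝ) - 2 * ℓ - 2) / 2⌋ : ℝ) * (⌈((N : ℝ) + 2 * ℓ + 4) / 2⌉ : ℝ)


lemma zig_odd (m : ℕ) :
    Tendsto (fun N : ℕ => zigzagCoeff N (2*(m+1)+1)) atTop
      (𝓝 ((-1)^(m+1) * ((2*(m+1)).factorial : ℝ) / (4^(m+1) * ((m+1).factorial : ℝ)^2))) := by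
  have t0 : Tendsto (fun N : ℕ =>
      (2*(N:ℝ) + (2*(m:ℝ)+3) - 2 - ((2*(m:ℝ)+3)+2)*(-1)^N)/N) atTop (𝓝 2) := by
    apply tendsto_div_const' 2 (4*(m:ℝ)+6)
    intro N
    have hk : (0:ℝ) ≤ m := Nat.cast_nonneg m
    rcases neg_one_pow_eq_or ℝ N with h | h <;> rw [h, abs_le] <;> constructor <;> linarith
  have t1 := tendsto_fact_ratio (2*m+3)
  have t2 : Tendsto (fun N : ℕ => (⌊(N:ℝ)/2⌋ : ℝ)/N) atTop (𝓝 (1/2)) := by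
    apply tendsto_half_aux 1
    intro N
    have h1 := Int.floor_le ((N:ℝ)/2)
    have h2 := Int.sub_one_lt_floor ((N:ℝ)/2)
    rw [abs_le]; constructor <;> linarith
  have t3 : Tendsto (fun N : ℕ => (⌈((N:ℝ)+1)/2⌉ : ℝ)/N) atTop (𝓝 (1/2)) := by
    apply tendsto_half_aux 2
    intro N
    have h1 := Int.le_ceil (((N:ℝ)+1)/2)
    have h2 := Int.ceil_lt_add_one (((N:ℝ)+1)/2)
    rw [abs_le]; constructor <;> linarith
  have tP : Tendsto (fun N : ℕ => ∏ k ∈ Finset.Icc 1 m,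
      ((⌊((N:ℝ) - 2*k - 1)/2⌋ : ℝ)/N * ((⌈((N:ℝ) + 2*k + 1)/2⌉ : ℝ)/N))) atTop
      (𝓝 (∏ _k ∈ Finset.Icc 1 m, ((1:ℝ)/2 * (1/2)))) := by
    apply tendsto_finset_prod
    intro k _
    have hk : (0:ℝ) ≤ k := Nat.cast_nonneg k
    have ta : Tendsto (fun N : ℕ => (⌊((N:ℝ) - 2*k - 1)/2⌋ : ℝ)/N) atTop (𝓝 (1/2)) := by
      apply tendsto_half_aux ((k:ℝ)+2)
      intro N
      have h1 := Int.floor_le (((N:ℝ) - 2*k - 1)/2)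
      have h2 := Int.sub_one_lt_floor (((N:ℝ) - 2*k - 1)/2)
      rw [abs_le]; constructor <;> linarith
    have tb : Tendsto (fun N : ℕ => (⌈((N:ℝ) + 2*k + 1)/2⌉ : ℝ)/N) atTop (𝓝 (1/2)) := by
      apply tendsto_half_aux ((k:ℝ)+2)
      intro N
      have h1 := Int.le_ceil (((N:ℝ) + 2*k + 1)/2)
      have h2 := Int.ceil_lt_add_one (((N:ℝ) + 2*k + 1)/2)
      rw [abs_le]; constructor <;> linarith
    exact ta.mul tb
  have key := ((((t0.mul t1).mul t2).mul t3).mul tP).const_mul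
      ((-1:ℝ)^(m+1) * ((2*m+1).factorial : ℝ) / (((m+1).factorial : ℝ) * (m.factorial : ℝ)))
  have hL : ((-1:ℝ)^(m+1) * ((2*m+1).factorial : ℝ) / (((m+1).factorial : ℝ) * (m.factorial : ℝ))) *
      (2 * 1 * (1/2) * (1/2) * ∏ _k ∈ Finset.Icc 1 m, ((1:ℝ)/2 * (1/2))) =
      (-1)^(m+1) * ((2*(m+1)).factorial : ℝ) / (4^(m+1) * ((m+1).factorial : ℝ)^2) := by
    rw [Finset.prod_const, Nat.card_Icc]
    rw [show (2*(m+1)).factorial = (2*m+2) * (2*m+1).factorial by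
      rw [show 2*(m+1) = (2*m+1)+1 by ring, Nat.factorial_succ]]
    rw [show (m+1).factorial = (m+1) * m.factorial from Nat.factorial_succ m]
    have h4 : ((m.factorial : ℝ)) ≠ 0 := Nat.cast_ne_zero.mpr (Nat.factorial_ne_zero _)
    have h5 : ((m:ℝ)+1) ≠ 0 := by positivity
    have h6 : ((1:ℝ)/2 * (1/2)) = 1/4 := by norm_num
    rw [h6]
    simp only [Nat.add_sub_cancel]
    push_cast
    field_simp
    ring
    rw [← mul_pow]; norm_num
  rw [hL] at key
  refine Tendsto.congr' ?_ key
  filter_upwards [eventually_ge_atTop 1] with N hN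
  have hN0 : ((N:ℝ)) ≠ 0 := by
    have : (0:ℝ) < N := by exact_mod_cast Nat.lt_of_lt_of_le Nat.zero_lt_one hN
    linarith
  rw [show 2*(m+1)+1 = 2*m+3 by ring, zigzagCoeff]
  rw [if_neg (by omega), if_neg (by omega), if_pos (by omega)]
  rw [show 2*m+3-2 = 2*m+1 by omega, show (2*m+3-1)/2 = m+1 by omega,
    show (2*m+3-3)/2 = m by omega, show (2*m+3)/2 = m+1 by omega]
  have hP : (∏ k ∈ Finset.Icc 1 m,
      ((⌊((N:ℝ) - 2*k - 1)/2⌋ : ℝ)/N * ((⌈((N:ℝ) + 2*k + 1)/2⌉ : ℝ)/N))) =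
      (∏ k ∈ Finset.Icc 1 m,
        (⌊((N:ℝ) - 2*k - 1)/2⌋ : ℝ) * (⌈((N:ℝ) + 2*k + 1)/2⌉ : ℝ)) / ((N:ℝ))^(2*m) := by
    simp only [div_mul_div_comm]
    rw [Finset.prod_div_distrib, Finset.prod_const, Nat.card_Icc]
    congr 1
    simp only [Nat.add_sub_cancel]
    ring
  rw [hP]
  have h4 : ((m.factorial : ℝ)) ≠ 0 := Nat.cast_ne_zero.mpr (Nat.factorial_ne_zero _)
  have h4' : (((m+1).factorial : ℝ)) ≠ 0 := Nat.cast_ne_zero.mpr (Nat.factorial_ne_zero _)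
  have h7 : (((N + (2*m+3)).factorial : ℝ)) ≠ 0 := Nat.cast_ne_zero.mpr (Nat.factorial_ne_zero _)
  push_cast
  field_simp
  ring

lemma zig_even1 :
    Tendsto (fun N : ℕ => zigzagCoeff N 2) atTop
      (𝓝 ((-1)^(1+1) * ((2*1).factorial : ℝ) / (4^1 * ((1:ℕ).factorial : ℝ)^2))) := by
  have t2 : Tendsto (fun N : ℕ => (⌊(N:ℝ)/2⌋ : ℝ)/N) atTop (𝓝 (1/2)) := by
    apply tendsto_half_aux 1
    intro N
    have h1 := Int.floor_le ((N:ℝ)/2)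
    have h2 := Int.sub_one_lt_floor ((N:ℝ)/2)
    rw [abs_le]; constructor <;> linarith
  have t3 : Tendsto (fun N : ℕ => (⌈((N:ℝ)+1)/2⌉ : ℝ)/N) atTop (𝓝 (1/2)) := by
    apply tendsto_half_aux 2
    intro N
    have h1 := Int.le_ceil (((N:ℝ)+1)/2)
    have h2 := Int.ceil_lt_add_one (((N:ℝ)+1)/2)
    rw [abs_le]; constructor <;> linarith
  have t4 := tendsto_nat_div_add 1 zero_le_one
  have t5 := tendsto_nat_div_add 2 zero_le_two
  have key := (((t2.mul t3).mul t4).mul t5).const_mul (2:ℝ)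
  have hL : (2:ℝ) * ((1/2) * (1/2) * 1 * 1) =
      (-1)^(1+1) * ((2*1).factorial : ℝ) / (4^1 * ((1:ℕ).factorial : ℝ)^2) := by
    norm_num [Nat.factorial]
  rw [hL] at key
  refine Tendsto.congr' ?_ key
  filter_upwards [eventually_ge_atTop 1] with N hN
  have hN0 : (0:ℝ) < N := by exact_mod_cast Nat.lt_of_lt_of_le Nat.zero_lt_one hN
  have h1 : ((N:ℝ)+1) ≠ 0 := by positivity
  have h2 : ((N:ℝ)+2) ≠ 0 := by positivity
  rw [zigzagCoeff]
  norm_num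
  field_simp

lemma zig_even2 (m : ℕ) :
    Tendsto (fun N : ℕ => zigzagCoeff N (2*(m+2))) atTop
      (𝓝 ((-1)^((m+2)+1) * ((2*(m+2)).factorial : ℝ) / (4^(m+2) * ((m+2).factorial : ℝ)^2))) := by
  have t1 := tendsto_fact_ratio (2*m+4)
  have t2 : Tendsto (fun N : ℕ => (⌊(N:ℝ)/2⌋ : ℝ)/N) atTop (𝓝 (1/2)) := by
    apply tendsto_half_aux 1
    intro N
    have h1 := Int.floor_le ((N:ℝ)/2)
    have h2 := Int.sub_one_lt_floor ((N:ℝ)/2)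
    rw [abs_le]; constructor <;> linarith
  have t3 : Tendsto (fun N : ℕ => (⌈((N:ℝ)+1)/2⌉ : ℝ)/N) atTop (𝓝 (1/2)) := by
    apply tendsto_half_aux 2
    intro N
    have h1 := Int.le_ceil (((N:ℝ)+1)/2)
    have h2 := Int.ceil_lt_add_one (((N:ℝ)+1)/2)
    rw [abs_le]; constructor <;> linarith
  have t4 : Tendsto (fun N : ℕ => (⌈((N:ℝ)-3)/2⌉ : ℝ)/N) atTop (𝓝 (1/2)) := by
    apply tendsto_half_aux 3
    intro N
    have h1 := Int.le_ceil (((N:ℝ)-3)/2)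
    have h2 := Int.ceil_lt_add_one (((N:ℝ)-3)/2)
    rw [abs_le]; constructor <;> linarith
  have t5 : Tendsto (fun N : ℕ => (⌈((N:ℝ)+3)/2⌉ : ℝ)/N) atTop (𝓝 (1/2)) := by
    apply tendsto_half_aux 3
    intro N
    have h1 := Int.le_ceil (((N:ℝ)+3)/2)
    have h2 := Int.ceil_lt_add_one (((N:ℝ)+3)/2)
    rw [abs_le]; constructor <;> linarith
  have tP : Tendsto (fun N : ℕ => ∏ k ∈ Finset.Icc 1 m,
      ((⌊((N:ℝ) - 2*k - 2)/2⌋ : ℝ)/N * ((⌈((N:ℝ) + 2*k + 4)/2⌉ : ℝ)/N))) atTop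
      (𝓝 (∏ _k ∈ Finset.Icc 1 m, ((1:ℝ)/2 * (1/2)))) := by
    apply tendsto_finset_prod
    intro k _
    have hk : (0:ℝ) ≤ k := Nat.cast_nonneg k
    have ta : Tendsto (fun N : ℕ => (⌊((N:ℝ) - 2*k - 2)/2⌋ : ℝ)/N) atTop (𝓝 (1/2)) := by
      apply tendsto_half_aux ((k:ℝ)+2)
      intro N
      have h1 := Int.floor_le (((N:ℝ) - 2*k - 2)/2)
      have h2 := Int.sub_one_lt_floor (((N:ℝ) - 2*k - 2)/2)
      rw [abs_le]; constructor <;> linarith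
    have tb : Tendsto (fun N : ℕ => (⌈((N:ℝ) + 2*k + 4)/2⌉ : ℝ)/N) atTop (𝓝 (1/2)) := by
      apply tendsto_half_aux ((k:ℝ)+3)
      intro N
      have h1 := Int.le_ceil (((N:ℝ) + 2*k + 4)/2)
      have h2 := Int.ceil_lt_add_one (((N:ℝ) + 2*k + 4)/2)
      rw [abs_le]; constructor <;> linarith
    exact ta.mul tb
  have key := (((((t1.mul t2).mul t3).mul t4).mul t5).mul tP).const_mul
      ((-1:ℝ)^(m+3) * ((2*m+4).factorial : ℝ) / (((m+2).factorial : ℝ))^2)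
  have hL : ((-1:ℝ)^(m+3) * ((2*m+4).factorial : ℝ) / (((m+2).factorial : ℝ))^2) *
      (1 * (1/2) * (1/2) * (1/2) * (1/2) * ∏ _k ∈ Finset.Icc 1 m, ((1:ℝ)/2 * (1/2))) =
      (-1)^((m+2)+1) * ((2*(m+2)).factorial : ℝ) / (4^(m+2) * ((m+2).factorial : ℝ)^2) := by
    rw [Finset.prod_const, Nat.card_Icc]
    rw [show 2*(m+2) = 2*m+4 by ring]
    have h4 : (((m+2).factorial : ℝ)) ≠ 0 := Nat.cast_ne_zero.mpr (Nat.factorial_ne_zero _)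
    have h6 : ((1:ℝ)/2 * (1/2)) = 1/4 := by norm_num
    rw [h6]
    simp only [Nat.add_sub_cancel]
    field_simp
    ring
    rw [← mul_pow]; norm_num
  rw [hL] at key
  refine Tendsto.congr' ?_ key
  filter_upwards [eventually_ge_atTop 1] with N hN
  have hN0 : ((N:ℝ)) ≠ 0 := by
    have : (0:ℝ) < N := by exact_mod_cast Nat.lt_of_lt_of_le Nat.zero_lt_one hN
    linarith
  rw [show 2*(m+2) = 2*m+4 by ring, zigzagCoeff]
  rw [if_neg (by omega), if_neg (by omega), if_neg (by omega)]
  rw [show (2*m+4)/2 = m+2 by omega]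
  rw [show m+2-2 = m by omega]
  have hP : (∏ k ∈ Finset.Icc 1 m,
      ((⌊((N:ℝ) - 2*k - 2)/2⌋ : ℝ)/N * ((⌈((N:ℝ) + 2*k + 4)/2⌉ : ℝ)/N))) =
      (∏ k ∈ Finset.Icc 1 m,
        (⌊((N:ℝ) - 2*k - 2)/2⌋ : ℝ) * (⌈((N:ℝ) + 2*k + 4)/2⌉ : ℝ)) / ((N:ℝ))^(2*m) := by
    simp only [div_mul_div_comm]
    rw [Finset.prod_div_distrib, Finset.prod_const, Nat.card_Icc]
    congr 1
    simp only [Nat.add_sub_cancel]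
    ring
  rw [hP]
  have h4 : (((m+2).factorial : ℝ)) ≠ 0 := Nat.cast_ne_zero.mpr (Nat.factorial_ne_zero _)
  have h7 : (((N + (2*m+4)).factorial : ℝ)) ≠ 0 := Nat.cast_ne_zero.mpr (Nat.factorial_ne_zero _)
  push_cast
  field_simp
  ring

/-- For every fixed integer `ℓ ≥ 1`, as `N → ∞` the zigzag coefficients
satisfy `lim_{N→∞} Z_N^{2ℓ} = (−1)^{ℓ+1}·(2ℓ)!/(4^ℓ·(ℓ!)²)` and
`lim_{N→∞} Z_N^{2ℓ+1} = (−1)^{ℓ}·(2ℓ)!/(4^ℓ·(ℓ!)²)`; in particular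
`Z_∞^{2ℓ} = −Z_∞^{2ℓ+1}`. -/
theorem zigzagCoeff_tendsto (ℓ : ℕ) (hℓ : 1 ≤ ℓ) :
    Tendsto (fun N : ℕ => zigzagCoeff N (2 * ℓ)) atTop
      (𝓝 ((-1) ^ (ℓ + 1) * ((2 * ℓ).factorial : ℝ) / (4 ^ ℓ * (ℓ.factorial : ℝ) ^ 2))) ∧
    Tendsto (fun N : ℕ => zigzagCoeff N (2 * ℓ + 1)) atTop
      (𝓝 ((-1) ^ ℓ * ((2 * ℓ).factorial : ℝ) / (4 ^ ℓ * (ℓ.factorial : ℝ) ^ 2))) ∧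
    (-1 : ℝ) ^ (ℓ + 1) * ((2 * ℓ).factorial : ℝ) / (4 ^ ℓ * (ℓ.factorial : ℝ) ^ 2) =
      -((-1) ^ ℓ * ((2 * ℓ).factorial : ℝ) / (4 ^ ℓ * (ℓ.factorial : ℝ) ^ 2)) := by
  refine ⟨?_, ?_, by rw [pow_succ]; ring⟩
  · rcases Nat.lt_or_ge ℓ 2 with h | h
    · have hℓ1 : ℓ = 1 := by omega
      subst hℓ1
      exact zig_even1
    · obtain ⟨m, rfl⟩ : ∃ m, ℓ = m + 2 := ⟨ℓ - 2, by omega⟩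
      exact zig_even2 m
  · obtain ⟨m, rfl⟩ : ∃ m, ℓ = m + 1 := ⟨ℓ - 1, by omega⟩
    exact zig_odd m
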